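/- arXiv:0910.0572 — 2 statements merged into one kernel-verified Lean document; each statement's English description precedes it below -/
import Mathlib

section
/- Let Ω ⊂ ℝ² be open, R : Ω → ℝ³ a C^∞ map, and L = g ∂/∂s + λ ∂/∂t a complex vector field with C^∞ coefficients. For a complex vector field V define A_V = (VR × V̄R)·(V²R × V̄R), B_V = (VR × V̄R)·(V²R × VR), C_V = (VR × V̄R)·(VR × V̄R), where V̄ is the vector field with conjugated coefficients, V²R = V(VR), and dot and cross products on ℂ³ are ℂ-bilinear extensions of the real ones. Let a : Ω → ℂ be a C^∞ nonvanishing function and set L' = aL. If a C¹ function w : Ω → ℂ solves C_L · Lw = A_L · w + B_L · w̄ on Ω, then the function w' = a·w solves the corresponding equation for L': C_{L'} · L'w' = A_{L'} · w' + B_{L'} · w̄' on Ω. -/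
open Matrix

noncomputable section

/-- Partial derivative in the first coordinate direction `s`. -/
def pds {E : Type*} [NormedAddCommGroup E] [NormedSpace ℝ E]
    (F : ℝ × ℝ → E) (p : ℝ × ℝ) : E := fderiv ℝ F p (1, 0)

/-- Partial derivative in the second coordinate direction `t`. -/
def pdt {E : Type*} [NormedAddCommGroup E] [NormedSpace ℝ E]
    (F : ℝ × ℝ → E) (p : ℝ × ℝ) : E := fderiv ℝ F p (0, 1)

/-- The complex vector field `V = α ∂/∂s + β ∂/∂t` acting on ℂ-valued functions. -/
def VopS (α β : ℝ × ℝ → ℂ) (w : ℝ × ℝ → ℂ) (p : ℝ × ℝ) : ℂ :=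
  α p * pds w p + β p * pdt w p

/-- The complex vector field `V = α ∂/∂s + β ∂/∂t` acting componentwise on ℂ³-valued maps. -/
def Vop3 (α β : ℝ × ℝ → ℂ) (W : ℝ × ℝ → Fin 3 → ℂ) (p : ℝ × ℝ) : Fin 3 → ℂ :=
  α p • pds W p + β p • pdt W p

/-- The complexification of a real map `R : ℝ² → ℝ³`. -/
def cplx (R : ℝ × ℝ → Fin 3 → ℝ) (p : ℝ × ℝ) : Fin 3 → ℂ := fun i => (R p i : ℂ)

/-- `VR`, the vector field `V = α ∂/∂s + β ∂/∂t` applied to (the complexification of) `R`. -/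
def VR (α β : ℝ × ℝ → ℂ) (R : ℝ × ℝ → Fin 3 → ℝ) : ℝ × ℝ → Fin 3 → ℂ :=
  Vop3 α β (cplx R)

/-- `V̄R`, the conjugated vector field applied to `R`. -/
def VbarR (α β : ℝ × ℝ → ℂ) (R : ℝ × ℝ → Fin 3 → ℝ) : ℝ × ℝ → Fin 3 → ℂ :=
  Vop3 (fun p => (starRingEnd ℂ) (α p)) (fun p => (starRingEnd ℂ) (β p)) (cplx R)

/-- `V²R = V(VR)`. -/
def V2R (α β : ℝ × ℝ → ℂ) (R : ℝ × ℝ → Fin 3 → ℝ) : ℝ × ℝ → Fin 3 → ℂ :=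
  Vop3 α β (VR α β R)

/-- `A_V = (VR × V̄R)·(V²R × V̄R)` (ℂ-bilinear dot and cross products). -/
def Acoef (α β : ℝ × ℝ → ℂ) (R : ℝ × ℝ → Fin 3 → ℝ) (p : ℝ × ℝ) : ℂ :=
  (VR α β R p ⨯₃ VbarR α β R p) ⬝ᵥ (V2R α β R p ⨯₃ VbarR α β R p)

/-- `B_V = (VR × V̄R)·(V²R × VR)`. -/
def Bcoef (α β : ℝ × ℝ → ℂ) (R : ℝ × ℝ → Fin 3 → ℝ) (p : ℝ × ℝ) : ℂ :=
  (VR α β R p ⨯₃ VbarR α β R p) ⬝ᵥ (V2R α β R p ⨯₃ VR α β R p)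

/-- `C_V = (VR × V̄R)·(VR × V̄R)`. -/
def Ccoef (α β : ℝ × ℝ → ℂ) (R : ℝ × ℝ → Fin 3 → ℝ) (p : ℝ × ℝ) : ℂ :=
  (VR α β R p ⨯₃ VbarR α β R p) ⬝ᵥ (VR α β R p ⨯₃ VbarR α β R p)

/-- Leibniz rule for the directional derivatives of a scalar-times-vector product. -/
private lemma fderiv_apply_smul {f : ℝ × ℝ → ℂ} {F : ℝ × ℝ → Fin 3 → ℂ} {p : ℝ × ℝ}
    (hf : DifferentiableAt ℝ f p) (hF : DifferentiableAt ℝ F p) (v : ℝ × ℝ) :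
    fderiv ℝ (fun q => f q • F q) p v = (fderiv ℝ f p v) • F p + f p • fderiv ℝ F p v := by
  rw [fderiv_fun_smul hf hF]
  simp [ContinuousLinearMap.smulRight_apply, add_comm]

/-- Scaling identity for `VR`, valid everywhere (pure algebra, no derivatives of `a`). -/
private lemma VR_scale (a g lam : ℝ × ℝ → ℂ) (R : ℝ × ℝ → Fin 3 → ℝ) :
    VR (fun q => a q * g q) (fun q => a q * lam q) R = fun q => a q • VR g lam R q := by
  funext q
  simp [VR, Vop3, mul_smul, smul_add]

private lemma VbarR_scale (a g lam : ℝ × ℝ → ℂ) (R : ℝ × ℝ → Fin 3 → ℝ) :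
    VbarR (fun q => a q * g q) (fun q => a q * lam q) R =
      fun q => (starRingEnd ℂ) (a q) • VbarR g lam R q := by
  funext q
  simp [VbarR, Vop3, _root_.map_mul, mul_smul, smul_add]

/-- Remark 2.1: If `w` solves `C_L·Lw = A_L·w + B_L·w̄` on Ω for the vector field
`L = g ∂/∂s + λ ∂/∂t` with smooth coefficients, and `a` is a smooth nonvanishing function,
then `w' = a·w` solves the corresponding equation for `L' = aL`. -/
theorem stmt_4 (Ω : Set (ℝ × ℝ)) (hΩ : IsOpen Ω)
    (R : ℝ × ℝ → Fin 3 → ℝ) (hR : ContDiffOn ℝ (⊤ : ℕ∞) R Ω)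
    (g lam : ℝ × ℝ → ℂ)
    (hg : ContDiffOn ℝ (⊤ : ℕ∞) g Ω) (hlam : ContDiffOn ℝ (⊤ : ℕ∞) lam Ω)
    (a : ℝ × ℝ → ℂ) (ha : ContDiffOn ℝ (⊤ : ℕ∞) a Ω) (ha0 : ∀ p ∈ Ω, a p ≠ 0)
    (w : ℝ × ℝ → ℂ) (hw : ContDiffOn ℝ 1 w Ω)
    (heq : ∀ p ∈ Ω,
      Ccoef g lam R p * VopS g lam w p =
        Acoef g lam R p * w p + Bcoef g lam R p * (starRingEnd ℂ) (w p)) :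
    ∀ p ∈ Ω,
      Ccoef (fun q => a q * g q) (fun q => a q * lam q) R p *
          VopS (fun q => a q * g q) (fun q => a q * lam q) (fun q => a q * w q) p =
        Acoef (fun q => a q * g q) (fun q => a q * lam q) R p * (a p * w p) +
          Bcoef (fun q => a q * g q) (fun q => a q * lam q) R p *
            (starRingEnd ℂ) (a p * w p) := by
  intro p hp
  have hnp : Ω ∈ nhds p := hΩ.mem_nhds hp
  -- differentiability facts at p
  have haC : ContDiffAt ℝ (⊤ : ℕ∞) a p := ha.contDiffAt hnp
  have hgC : ContDiffAt ℝ (⊤ : ℕ∞) g p := hg.contDiffAt hnp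
  have hlamC : ContDiffAt ℝ (⊤ : ℕ∞) lam p := hlam.contDiffAt hnp
  have hRC : ContDiffAt ℝ (⊤ : ℕ∞) R p := hR.contDiffAt hnp
  have hcplx : ContDiffAt ℝ (⊤ : ℕ∞) (cplx R) p := by
    apply contDiffAt_pi.2
    intro i
    exact Complex.ofRealCLM.contDiff.contDiffAt.comp p ((contDiffAt_pi.1 hRC) i)
  have hpds : ContDiffAt ℝ (⊤ : ℕ∞) (fun q => fderiv ℝ (cplx R) q (1, 0)) p :=
    (hcplx.fderiv_right (m := (⊤ : ℕ∞)) (by simp)).clm_apply contDiffAt_const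
  have hpdt : ContDiffAt ℝ (⊤ : ℕ∞) (fun q => fderiv ℝ (cplx R) q (0, 1)) p :=
    (hcplx.fderiv_right (m := (⊤ : ℕ∞)) (by simp)).clm_apply contDiffAt_const
  have hVRdiff : DifferentiableAt ℝ (VR g lam R) p := by
    have heqVR : VR g lam R = fun q =>
        g q • (fun q => fderiv ℝ (cplx R) q (1, 0)) q +
        lam q • (fun q => fderiv ℝ (cplx R) q (0, 1)) q := rfl
    rw [heqVR]
    exact ((hgC.differentiableAt (by simp)).smul (hpds.differentiableAt (by simp))).add
      ((hlamC.differentiableAt (by simp)).smul (hpdt.differentiableAt (by simp)))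
  have hadiff : DifferentiableAt ℝ a p := haC.differentiableAt (by simp)
  have hwdiff : DifferentiableAt ℝ w p :=
    (hw.contDiffAt hnp).differentiableAt one_ne_zero
  -- notation
  set c := a p with hc
  set u := VR g lam R p with hu
  set v := VbarR g lam R p with hv
  set z := V2R g lam R p with hz
  set La := g p * pds a p + lam p * pdt a p with hLa
  -- key computations
  have h1 : VR (fun q => a q * g q) (fun q => a q * lam q) R p = c • u := by
    rw [VR_scale]
  have h2 : VbarR (fun q => a q * g q) (fun q => a q * lam q) R p =
      (starRingEnd ℂ) c • v := by
    rw [VbarR_scale]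
  have h3 : V2R (fun q => a q * g q) (fun q => a q * lam q) R p =
      (c * La) • u + (c * c) • z := by
    show Vop3 _ _ (VR (fun q => a q * g q) (fun q => a q * lam q) R) p = _
    rw [VR_scale]
    have hs : pds (fun q => a q • VR g lam R q) p = pds a p • u + c • pds (VR g lam R) p :=
      fderiv_apply_smul hadiff hVRdiff (1, 0)
    have ht : pdt (fun q => a q • VR g lam R q) p = pdt a p • u + c • pdt (VR g lam R) p :=
      fderiv_apply_smul hadiff hVRdiff (0, 1)
    rw [Vop3, hs, ht]
    have hzz : z = g p • pds (VR g lam R) p + lam p • pdt (VR g lam R) p := rfl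
    rw [hLa, hzz]
    simp only [smul_add, smul_smul, add_smul]
    module
  have h4 : VopS (fun q => a q * g q) (fun q => a q * lam q) (fun q => a q * w q) p =
      c * (La * w p + c * VopS g lam w p) := by
    have hs : pds (fun q => a q * w q) p = c * pds w p + w p * pds a p := by
      show fderiv ℝ (fun q => a q * w q) p (1, 0) = _
      rw [fderiv_fun_mul hadiff hwdiff]
      simp [pds, hc]
    have ht : pdt (fun q => a q * w q) p = c * pdt w p + w p * pdt a p := by
      show fderiv ℝ (fun q => a q * w q) p (0, 1) = _
      rw [fderiv_fun_mul hadiff hwdiff]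
      simp [pdt, hc]
    rw [VopS, hs, ht, VopS, hLa]
    ring
  -- coefficient computations
  have hC : Ccoef (fun q => a q * g q) (fun q => a q * lam q) R p =
      c ^ 2 * (starRingEnd ℂ) c ^ 2 * Ccoef g lam R p := by
    rw [Ccoef, h1, h2, Ccoef, ← hu, ← hv]
    simp only [_root_.map_smul, LinearMap.map_smul₂, LinearMap.smul_apply,
      smul_dotProduct, dotProduct_smul, smul_smul, smul_eq_mul]
    ring
  have hA : Acoef (fun q => a q * g q) (fun q => a q * lam q) R p =
      c ^ 2 * (starRingEnd ℂ) c ^ 2 * La * Ccoef g lam R p +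
        c ^ 3 * (starRingEnd ℂ) c ^ 2 * Acoef g lam R p := by
    rw [Acoef, h1, h2, h3, Acoef, Ccoef, ← hu, ← hv, ← hz]
    simp only [_root_.map_add, _root_.map_smul, LinearMap.map_smul₂, LinearMap.add_apply,
      LinearMap.smul_apply, smul_dotProduct, dotProduct_smul, dotProduct_add, add_dotProduct,
      smul_smul, smul_eq_mul]
    ring
  have hB : Bcoef (fun q => a q * g q) (fun q => a q * lam q) R p =
      c ^ 4 * (starRingEnd ℂ) c * Bcoef g lam R p := by
    rw [Bcoef, h1, h2, h3, Bcoef, ← hu, ← hv, ← hz]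
    simp only [_root_.map_add, _root_.map_smul, LinearMap.map_smul₂, LinearMap.add_apply,
      LinearMap.smul_apply, smul_dotProduct, dotProduct_smul, dotProduct_add, add_dotProduct,
      smul_smul, smul_eq_mul, cross_self, dotProduct_zero, mul_zero]
    ring
  rw [hC, hA, hB, h4, _root_.map_mul]
  linear_combination (c ^ 4 * (starRingEnd ℂ) c ^ 2) * heq p hp
end
end

section
/- Let m ≥ 2 be an integer and P : ℝ → ℝ a C², 2π-periodic function. Let f be the function on ℝ² \ {0} given in polar coordinates by f(ρ cos φ, ρ sin φ) = ρ^m P(φ) for ρ > 0. Then at every point of ℝ² \ {0}: f_xx f_yy − f_xy² = (m−1) ρ^{2m−4} [ m² P(φ)² + m P(φ) P''(φ) − (m−1) P'(φ)² ]. Consequently, f_xx f_yy − f_xy² > 0 everywhere on ℝ² \ {0} if and only if m² P(φ)² + m P(φ) P''(φ) − (m−1) P'(φ)² > 0 for all φ ∈ ℝ. -/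
open Real

/-- Second partial derivative `∂²F/∂x²`. -/
noncomputable def fxx (F : ℝ × ℝ → ℝ) (p : ℝ × ℝ) : ℝ :=
  fderiv ℝ (fun q => fderiv ℝ F q (1, 0)) p (1, 0)

/-- Second partial derivative `∂²F/∂x∂y`. -/
noncomputable def fxy (F : ℝ × ℝ → ℝ) (p : ℝ × ℝ) : ℝ :=
  fderiv ℝ (fun q => fderiv ℝ F q (0, 1)) p (1, 0)

/-- Second partial derivative `∂²F/∂y²`. -/
noncomputable def fyy (F : ℝ × ℝ → ℝ) (p : ℝ × ℝ) : ℝ :=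
  fderiv ℝ (fun q => fderiv ℝ F q (0, 1)) p (0, 1)

/-!
Near the ray at angle `φ`, `F` coincides with `r ^ m P(θ)`, where `r = √(x² + y²)` and `θ` is a
smooth branch of the polar angle on the half-plane facing that ray; so `F` is `C²` there.
Differentiating `r ^ n Q(θ)` in `x` or `y` gives a combination of `r ^ (n - 2) Q(θ)` and
`r ^ (n - 2) Q'(θ)`, and doing this twice shows that at `ρ (cos φ, sin φ)`, in the orthonormal frame
`(cos φ, sin φ)`, `(-sin φ, cos φ)`, the Hessian is
`ρ ^ (m - 2) [[m (m - 1) P, (m - 1) P'], [(m - 1) P', m P + P'']]`.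
A rotation does not change the determinant, which gives the formula; the positivity criterion
follows because `(m - 1) ρ ^ (2m - 4) > 0` and every nonzero point has polar coordinates.
-/

open Filter Topology Set

noncomputable def linearForm (a b : ℝ) : ℝ × ℝ →L[ℝ] ℝ :=
  a • ContinuousLinearMap.fst ℝ ℝ ℝ + b • ContinuousLinearMap.snd ℝ ℝ ℝ

@[simp] lemma linearForm_apply (a b : ℝ) (v : ℝ × ℝ) : linearForm a b v = a * v.1 + b * v.2 := by
  simp [linearForm]

noncomputable def polarRadius (p : ℝ × ℝ) : ℝ := √(p.1 ^ 2 + p.2 ^ 2)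

lemma polarRadius_polar {ρ : ℝ} (hρ : 0 ≤ ρ) (φ : ℝ) : polarRadius (ρ * cos φ, ρ * sin φ) = ρ := by
  have : (ρ * cos φ) ^ 2 + (ρ * sin φ) ^ 2 = ρ ^ 2 := by
    linear_combination ρ ^ 2 * sin_sq_add_cos_sq φ
  rw [polarRadius, this, sqrt_sq hρ]

lemma hasFDerivAt_polarRadius {q : ℝ × ℝ} (hq : 0 < q.1 ^ 2 + q.2 ^ 2) :
    HasFDerivAt polarRadius (linearForm (q.1 / polarRadius q) (q.2 / polarRadius q)) q := by
  have hsq : HasFDerivAt (fun p : ℝ × ℝ => p.1 ^ 2 + p.2 ^ 2)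
      (linearForm (2 * q.1) (2 * q.2)) q :=
    ((hasFDerivAt_fst.pow 2).add (hasFDerivAt_snd.pow 2)).congr_fderiv
      (ContinuousLinearMap.ext fun v => by simp)
  refine (hsq.sqrt hq.ne').congr_fderiv (ContinuousLinearMap.ext fun v => ?_)
  have : 0 < √(q.1 ^ 2 + q.2 ^ 2) := sqrt_pos.2 hq
  simp only [FunLike.coe_smul, Pi.smul_apply, linearForm_apply, smul_eq_mul, polarRadius]
  field_simp

section LocalPolarCoordinates

variable (φ : ℝ)

def halfPlane : Set (ℝ × ℝ) := {p | 0 < linearForm (cos φ) (sin φ) p}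

-- A branch of the polar angle on `halfPlane φ`, equal to `φ` on the ray through `(cos φ, sin φ)`.
noncomputable def localArg (p : ℝ × ℝ) : ℝ :=
  φ + arctan (linearForm (-sin φ) (cos φ) p / linearForm (cos φ) (sin φ) p)

variable {φ}

lemma isOpen_halfPlane : IsOpen (halfPlane φ) :=
  isOpen_lt continuous_const (linearForm _ _).continuous

lemma polar_mem_halfPlane {ρ : ℝ} (hρ : 0 < ρ) : (ρ * cos φ, ρ * sin φ) ∈ halfPlane φ := by
  have : cos φ * (ρ * cos φ) + sin φ * (ρ * sin φ) = ρ := by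
    linear_combination ρ * sin_sq_add_cos_sq φ
  simpa [halfPlane, this] using hρ

lemma localArg_polar (ρ : ℝ) : localArg φ (ρ * cos φ, ρ * sin φ) = φ := by
  have : linearForm (-sin φ) (cos φ) (ρ * cos φ, ρ * sin φ) = 0 := by simp; ring
  simp [localArg, this]

lemma rotated_sq_add_sq (p : ℝ × ℝ) :
    linearForm (cos φ) (sin φ) p ^ 2 + linearForm (-sin φ) (cos φ) p ^ 2 = p.1 ^ 2 + p.2 ^ 2 := by
  simp only [linearForm_apply]
  linear_combination (p.1 ^ 2 + p.2 ^ 2) * sin_sq_add_cos_sq φ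

lemma sq_add_sq_pos_of_mem_halfPlane {p : ℝ × ℝ} (hp : p ∈ halfPlane φ) :
    0 < p.1 ^ 2 + p.2 ^ 2 := by
  rw [← rotated_sq_add_sq (φ := φ)]
  have : 0 < linearForm (cos φ) (sin φ) p := hp
  positivity

lemma sqrt_mul_cos_sin_arctan_div {u : ℝ} (hu : 0 < u) (v : ℝ) :
    √(u ^ 2 + v ^ 2) * cos (arctan (v / u)) = u ∧
      √(u ^ 2 + v ^ 2) * sin (arctan (v / u)) = v := by
  have h : √(1 + (v / u) ^ 2) = √(u ^ 2 + v ^ 2) / u := by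
    rw [div_pow, one_add_div (by positivity), sqrt_div' _ (sq_nonneg u), sqrt_sq hu.le, add_comm]
  have : 0 < √(u ^ 2 + v ^ 2) := sqrt_pos.2 (by positivity)
  rw [cos_arctan, sin_arctan, h]
  constructor <;> field_simp

lemma polar_polarRadius_localArg {p : ℝ × ℝ} (hp : p ∈ halfPlane φ) :
    (polarRadius p * cos (localArg φ p), polarRadius p * sin (localArg φ p)) = p := by
  obtain ⟨hu, hv⟩ := sqrt_mul_cos_sin_arctan_div hp (linearForm (-sin φ) (cos φ) p)
  rw [rotated_sq_add_sq, ← polarRadius] at hu hv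
  rw [localArg, cos_add, sin_add]
  simp only [linearForm_apply] at hu hv ⊢
  ext
  · linear_combination cos φ * hu - sin φ * hv + p.1 * sin_sq_add_cos_sq φ
  · linear_combination sin φ * hu + cos φ * hv + p.2 * sin_sq_add_cos_sq φ

lemma hasFDerivAt_localArg {q : ℝ × ℝ} (hq : q ∈ halfPlane φ) :
    HasFDerivAt (localArg φ)
      (linearForm (-q.2 / (q.1 ^ 2 + q.2 ^ 2)) (q.1 / (q.1 ^ 2 + q.2 ^ 2))) q := by
  have hr := rotated_sq_add_sq (φ := φ) q
  have hq0 := (sq_add_sq_pos_of_mem_halfPlane hq).ne'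
  set u := linearForm (cos φ) (sin φ)
  set v := linearForm (-sin φ) (cos φ)
  have hu : u q ≠ 0 := ne_of_gt hq
  have h := ((v.hasFDerivAt.mul
    ((hasDerivAt_inv hu).comp_hasFDerivAt q u.hasFDerivAt)).arctan).const_add φ
  refine h.congr_fderiv (ContinuousLinearMap.ext fun w => ?_)
  simp only [Pi.mul_apply, Function.comp_apply, add_apply, FunLike.coe_smul, Pi.smul_apply,
    smul_eq_mul, linearForm_apply]
  field_simp
  rw [hr]
  simp only [u, v, linearForm_apply]
  linear_combination (q.1 ^ 2 + q.2 ^ 2) * (q.1 * w.2 - q.2 * w.1) * sin_sq_add_cos_sq φ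

-- The exponent is an integer because each partial derivative lowers it by two.
variable (φ) in
noncomputable def polarMonomial (n : ℤ) (Q : ℝ → ℝ) (p : ℝ × ℝ) : ℝ :=
  polarRadius p ^ n * Q (localArg φ p)

lemma polarMonomial_polar (n : ℤ) (Q : ℝ → ℝ) {ρ : ℝ} (hρ : 0 ≤ ρ) :
    polarMonomial φ n Q (ρ * cos φ, ρ * sin φ) = ρ ^ n * Q φ := by
  rw [polarMonomial, polarRadius_polar hρ, localArg_polar]

lemma hasFDerivAt_polarMonomial (n : ℤ) {Q : ℝ → ℝ} (hQ : Differentiable ℝ Q) {q : ℝ × ℝ}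
    (hq : q ∈ halfPlane φ) :
    HasFDerivAt (polarMonomial φ n Q)
      (linearForm
        (n * q.1 * polarMonomial φ (n - 2) Q q - q.2 * polarMonomial φ (n - 2) (deriv Q) q)
        (n * q.2 * polarMonomial φ (n - 2) Q q + q.1 * polarMonomial φ (n - 2) (deriv Q) q)) q := by
  have hq2 := sq_add_sq_pos_of_mem_halfPlane hq
  have hr : polarRadius q ≠ 0 := (sqrt_pos.2 hq2).ne'
  have hrsq : polarRadius q ^ 2 = q.1 ^ 2 + q.2 ^ 2 := sq_sqrt hq2.le
  have h := ((hasDerivAt_zpow n _ (Or.inl hr)).comp_hasFDerivAt q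
    (hasFDerivAt_polarRadius hq2)).mul
      ((hQ _).hasDerivAt.comp_hasFDerivAt q (hasFDerivAt_localArg hq))
  refine h.congr_fderiv (ContinuousLinearMap.ext fun w => ?_)
  have h1 : polarRadius q ^ (n - 1) = polarRadius q ^ (n - 2) * polarRadius q := by
    rw [← zpow_add_one₀ hr]; ring_nf
  have h0 : polarRadius q ^ n = polarRadius q ^ (n - 2) * polarRadius q ^ 2 := by
    rw [← zpow_natCast, ← zpow_add₀ hr]; ring_nf
  simp only [polarMonomial, add_apply, FunLike.coe_smul, Pi.smul_apply, smul_eq_mul,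
    linearForm_apply, Function.comp_apply, h1, h0, ← hrsq]
  field_simp
  ring

lemma eqOn_polarMonomial {F : ℝ × ℝ → ℝ} {n : ℤ} {Q : ℝ → ℝ}
    (hF : ∀ ρ ψ : ℝ, 0 < ρ → F (ρ * cos ψ, ρ * sin ψ) = ρ ^ n * Q ψ) :
    EqOn F (polarMonomial φ n Q) (halfPlane φ) := by
  intro p hp
  have hr : 0 < polarRadius p := sqrt_pos.2 (sq_add_sq_pos_of_mem_halfPlane hp)
  conv_lhs => rw [← polar_polarRadius_localArg hp]
  exact hF _ _ hr

lemma fderiv_apply_of_eqOn {F : ℝ × ℝ → ℝ} {n : ℤ} {Q : ℝ → ℝ} (hQ : Differentiable ℝ Q)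
    (hF : EqOn F (polarMonomial φ n Q) (halfPlane φ)) {q : ℝ × ℝ} (hq : q ∈ halfPlane φ)
    (v : ℝ × ℝ) :
    fderiv ℝ F q v = n * (v.1 * q.1 + v.2 * q.2) * polarMonomial φ (n - 2) Q q
      + (v.2 * q.1 - v.1 * q.2) * polarMonomial φ (n - 2) (deriv Q) q := by
  rw [(hF.eventuallyEq_of_mem (isOpen_halfPlane.mem_nhds hq)).fderiv_eq,
    (hasFDerivAt_polarMonomial n hQ hq).fderiv, linearForm_apply]
  ring

end LocalPolarCoordinates

-- The symmetric bilinear form with matrix `[[a, b], [b, d]]` in the frame `(cos φ, sin φ)`,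
-- `(-sin φ, cos φ)`.
noncomputable def rotatedForm (φ a b d : ℝ) (v w : ℝ × ℝ) : ℝ :=
  a * linearForm (cos φ) (sin φ) v * linearForm (cos φ) (sin φ) w
    + b * (linearForm (cos φ) (sin φ) v * linearForm (-sin φ) (cos φ) w
      + linearForm (-sin φ) (cos φ) v * linearForm (cos φ) (sin φ) w)
    + d * linearForm (-sin φ) (cos φ) v * linearForm (-sin φ) (cos φ) w

lemma rotatedForm_det (φ a b d : ℝ) :
    rotatedForm φ a b d (1, 0) (1, 0) * rotatedForm φ a b d (0, 1) (0, 1)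
      - rotatedForm φ a b d (0, 1) (1, 0) ^ 2 = a * d - b ^ 2 := by
  simp only [rotatedForm, linearForm_apply]
  linear_combination (a * d - b ^ 2) * (cos φ ^ 2 + sin φ ^ 2 + 1) * sin_sq_add_cos_sq φ

lemma fderiv_fderiv_apply_of_eqOn {φ : ℝ} {F : ℝ × ℝ → ℝ} {n : ℤ} {Q : ℝ → ℝ}
    (hQ : Differentiable ℝ Q) (hQ' : Differentiable ℝ (deriv Q))
    (hF : EqOn F (polarMonomial φ n Q) (halfPlane φ))
    {ρ : ℝ} (hρ : 0 < ρ) (v w : ℝ × ℝ) :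
    fderiv ℝ (fun q => fderiv ℝ F q v) (ρ * cos φ, ρ * sin φ) w =
      ρ ^ (n - 2) * rotatedForm φ (n * (n - 1) * Q φ) ((n - 1) * deriv Q φ)
        (n * Q φ + deriv (deriv Q) φ) v w := by
  have hq₀ := polar_mem_halfPlane (φ := φ) hρ
  have heq : (fun q => fderiv ℝ F q v) =ᶠ[𝓝 (ρ * cos φ, ρ * sin φ)] fun q =>
      n * (v.1 * q.1 + v.2 * q.2) * polarMonomial φ (n - 2) Q q
        + (v.2 * q.1 - v.1 * q.2) * polarMonomial φ (n - 2) (deriv Q) q :=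
    eventually_of_mem (isOpen_halfPlane.mem_nhds hq₀) fun q hq =>
      fderiv_apply_of_eqOn hQ hF hq v
  have hD := ((((hasFDerivAt_fst.const_mul v.1).add (hasFDerivAt_snd.const_mul v.2)).const_mul
      (n : ℝ)).mul (hasFDerivAt_polarMonomial (n - 2) hQ hq₀)).add
    (((hasFDerivAt_fst.const_mul v.2).sub (hasFDerivAt_snd.const_mul v.1)).mul
      (hasFDerivAt_polarMonomial (n - 2) hQ' hq₀))
  rw [(hD.congr_of_eventuallyEq heq).fderiv]
  have hpow : ρ ^ (n - 2) = ρ ^ (n - 2 - 2) * ρ ^ 2 := by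
    rw [← zpow_natCast, ← zpow_add₀ hρ.ne']; ring_nf
  simp only [add_apply, sub_apply, FunLike.coe_smul, Pi.smul_apply, smul_eq_mul,
    linearForm_apply, polarMonomial_polar _ _ hρ.le, rotatedForm, hpow, Pi.add_apply,
    Pi.sub_apply, ContinuousLinearMap.coe_fst', ContinuousLinearMap.coe_snd']
  push_cast
  linear_combination (-ρ ^ (n - 2 - 2) * ρ ^ 2 *
    (n * Q φ * (v.1 * w.1 + v.2 * w.2) + deriv Q φ * (v.2 * w.1 - v.1 * w.2))) *
    sin_sq_add_cos_sq φ

lemma hessianDet_of_eqOn {φ : ℝ} {F : ℝ × ℝ → ℝ} {n : ℤ} {Q : ℝ → ℝ}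
    (hQ : Differentiable ℝ Q) (hQ' : Differentiable ℝ (deriv Q))
    (hF : EqOn F (polarMonomial φ n Q) (halfPlane φ))
    {ρ : ℝ} (hρ : 0 < ρ) :
    fxx F (ρ * cos φ, ρ * sin φ) * fyy F (ρ * cos φ, ρ * sin φ)
        - fxy F (ρ * cos φ, ρ * sin φ) ^ 2 =
      (ρ ^ (n - 2)) ^ 2 * (n - 1) *
        (n ^ 2 * Q φ ^ 2 + n * Q φ * deriv (deriv Q) φ - (n - 1) * deriv Q φ ^ 2) := by
  simp only [fxx, fxy, fyy, fderiv_fderiv_apply_of_eqOn hQ hQ' hF hρ]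
  linear_combination (ρ ^ (n - 2)) ^ 2 * rotatedForm_det φ (n * (n - 1) * Q φ)
    ((n - 1) * deriv Q φ) (n * Q φ + deriv (deriv Q) φ)

lemma exists_polar_eq_of_ne_zero {p : ℝ × ℝ} (hp : p ≠ 0) :
    ∃ ρ φ : ℝ, 0 < ρ ∧ (ρ * cos φ, ρ * sin φ) = p := by
  set z : ℂ := ⟨p.1, p.2⟩
  have hz : z ≠ 0 := fun h => hp (Prod.ext (congrArg Complex.re h) (congrArg Complex.im h))
  exact ⟨‖z‖, z.arg, norm_pos_iff.2 hz,
    Prod.ext (Complex.norm_mul_cos_arg z) (Complex.norm_mul_sin_arg z)⟩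

lemma hessianDet_polar {m : ℕ} (hm : 2 ≤ m) {P : ℝ → ℝ} (hP : ContDiff ℝ 2 P) {F : ℝ × ℝ → ℝ}
    (hF : ∀ ρ φ : ℝ, 0 < ρ → F (ρ * cos φ, ρ * sin φ) = ρ ^ m * P φ) (ρ φ : ℝ) (hρ : 0 < ρ) :
    fxx F (ρ * cos φ, ρ * sin φ) * fyy F (ρ * cos φ, ρ * sin φ)
        - fxy F (ρ * cos φ, ρ * sin φ) ^ 2 =
      ((m : ℝ) - 1) * ρ ^ (2 * m - 4) *
        ((m : ℝ) ^ 2 * P φ ^ 2 + m * P φ * deriv (deriv P) φ - ((m : ℝ) - 1) * deriv P φ ^ 2) := by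
  have hpolar : EqOn F (polarMonomial φ m P) (halfPlane φ) :=
    eqOn_polarMonomial fun ρ ψ hρ => by rw [hF ρ ψ hρ, zpow_natCast]
  have hexp : (m : ℤ) - 2 = ((m - 2 : ℕ) : ℤ) := by omega
  rw [hessianDet_of_eqOn (hP.differentiable (by norm_num)) hP.differentiable_deriv_two hpolar hρ,
    hexp, zpow_natCast, ← pow_mul, show (m - 2) * 2 = 2 * m - 4 by omega]
  push_cast
  ring

theorem stmt_9_general (m : ℕ) (hm : 2 ≤ m) (P : ℝ → ℝ)
    (hP : ContDiff ℝ 2 P)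
    (F : ℝ × ℝ → ℝ)
    (hF : ∀ ρ φ : ℝ, 0 < ρ → F (ρ * Real.cos φ, ρ * Real.sin φ) = ρ ^ m * P φ) :
    (∀ ρ φ : ℝ, 0 < ρ →
      fxx F (ρ * Real.cos φ, ρ * Real.sin φ) * fyy F (ρ * Real.cos φ, ρ * Real.sin φ) -
          fxy F (ρ * Real.cos φ, ρ * Real.sin φ) ^ 2 =
        ((m : ℝ) - 1) * ρ ^ (2 * m - 4) *
          ((m : ℝ) ^ 2 * P φ ^ 2 + (m : ℝ) * P φ * deriv (deriv P) φ -
            ((m : ℝ) - 1) * deriv P φ ^ 2)) ∧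
    ((∀ p : ℝ × ℝ, p ≠ 0 → 0 < fxx F p * fyy F p - fxy F p ^ 2) ↔
      ∀ φ : ℝ,
        0 < (m : ℝ) ^ 2 * P φ ^ 2 + (m : ℝ) * P φ * deriv (deriv P) φ -
          ((m : ℝ) - 1) * deriv P φ ^ 2) := by
  have hdet := hessianDet_polar hm hP hF
  have hm1 : (0 : ℝ) < m - 1 := by
    have : (2 : ℝ) ≤ m := by exact_mod_cast hm
    linarith
  refine ⟨hdet, fun hpos φ => ?_, fun hpos p hp => ?_⟩
  · have hne : (1 * cos φ, 1 * sin φ) ≠ 0 :=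
      ne_of_mem_of_not_mem (polar_mem_halfPlane one_pos) (by simp [halfPlane])
    have := hpos _ hne
    rw [hdet 1 φ one_pos, one_pow, mul_one] at this
    exact pos_of_mul_pos_right this hm1.le
  · obtain ⟨ρ, φ, hρ, rfl⟩ := exists_polar_eq_of_ne_zero hp
    rw [hdet ρ φ hρ]
    have := hpos φ
    positivity

/-- For `f(ρcos φ, ρsin φ) = ρ^m P(φ)` with `m ≥ 2` and `P` C² and 2π-periodic,
the Hessian determinant off the origin is
`f_xx f_yy − f_xy² = (m−1) ρ^{2m−4}[m²P² + mPP'' − (m−1)P'²]`; consequently it is positive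
everywhere on `ℝ² \ {0}` iff `m²P² + mPP'' − (m−1)P'² > 0` for all `φ`. -/
theorem stmt_9 (m : ℕ) (hm : 2 ≤ m) (P : ℝ → ℝ)
    (hP : ContDiff ℝ 2 P) (hper : Function.Periodic P (2 * π))
    (F : ℝ × ℝ → ℝ)
    (hF : ∀ ρ φ : ℝ, 0 < ρ → F (ρ * Real.cos φ, ρ * Real.sin φ) = ρ ^ m * P φ) :
    (∀ ρ φ : ℝ, 0 < ρ →
      fxx F (ρ * Real.cos φ, ρ * Real.sin φ) * fyy F (ρ * Real.cos φ, ρ * Real.sin φ) -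
          fxy F (ρ * Real.cos φ, ρ * Real.sin φ) ^ 2 =
        ((m : ℝ) - 1) * ρ ^ (2 * m - 4) *
          ((m : ℝ) ^ 2 * P φ ^ 2 + (m : ℝ) * P φ * deriv (deriv P) φ -
            ((m : ℝ) - 1) * deriv P φ ^ 2)) ∧
    ((∀ p : ℝ × ℝ, p ≠ 0 → 0 < fxx F p * fyy F p - fxy F p ^ 2) ↔
      ∀ φ : ℝ,
        0 < (m : ℝ) ^ 2 * P φ ^ 2 + (m : ℝ) * P φ * deriv (deriv P) φ -
          ((m : ℝ) - 1) * deriv P φ ^ 2) :=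
  stmt_9_general m hm P hP F hF
end
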